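/- arXiv:1610.01329 — 6 statements merged into one kernel-verified Lean document; each statement's English description precedes it below -/
import Mathlib

section
/- Theta decomposition of the square: ϑ(z+1/2; τ)² = θ_{1,1}(τ) ϑ_{1,0}(z;τ) + θ_{1,0}(τ) ϑ_{1,1}(z;τ), where ϑ_{m,a}(z;τ) := Σ_{n∈ℤ} q^{(2mn+a)²/(4m)} ζ^{2mn+a} and θ_{m,a}(τ) := ϑ_{m,a}(0;τ). -/
open Complex

/-- The q-Pochhammer symbol `(a;q)_∞ = ∏_{n ≥ 1} (1 - a q^{n-1})`. -/
noncomputable def qPoch (a q : ℂ) : ℂ := ∏' n : ℕ, (1 - a * q ^ n)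

/-- The Jacobi theta function `ϑ(z;τ) = ∑_{n ∈ 1/2 + ℤ} e^{πi n² τ + 2πi n (z + 1/2)}`. -/
noncomputable def jTheta (z τ : ℂ) : ℂ :=
  ∑' n : ℤ, Complex.exp ((Real.pi : ℂ) * I * ((n : ℂ) + 1/2) ^ 2 * τ +
    2 * (Real.pi : ℂ) * I * ((n : ℂ) + 1/2) * (z + 1/2))

/-- `ϑ_{m,a}(z;τ) = ∑_{n ∈ ℤ} q^{(2mn+a)²/(4m)} ζ^{2mn+a}` with `q = e^{2πiτ}`, `ζ = e^{2πiz}`,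
fractional powers interpreted via `q^x = e^{2πiτx}`, `ζ^x = e^{2πizx}`. -/
noncomputable def thetaMA (m a : ℝ) (z τ : ℂ) : ℂ :=
  ∑' n : ℤ, Complex.exp (2 * (Real.pi : ℂ) * I * τ * ((2 * m * n + a) ^ 2 / (4 * m)) +
    2 * (Real.pi : ℂ) * I * z * (2 * m * n + a))

/-- The theta constant `θ_{m,a}(τ) = ϑ_{m,a}(0;τ)`. -/
noncomputable def thetaC (m a : ℝ) (τ : ℂ) : ℂ := thetaMA m a 0 τ

/-!
Squaring `ϑ(z + 1/2; τ) = ∑_{a ∈ 1/2 + ℤ} e^{πi a² τ + 2πi a (z + 1)}` gives a double sum over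
`a, b ∈ 1/2 + ℤ`. With `s = a + b` and `d = a - b` the exponent becomes
`2πi τ (s² + d²)/4 + 2πi s (z + 1)`, and `(a, b) ↦ (s, d)` is a bijection onto the pairs of
integers of opposite parity. Splitting according to the parity of `s` gives the two products, and
`ζ^s` is unchanged by `z ↦ z + 1`.
-/

def Int.prodEquivSumByParity : (ℤ × ℤ) ⊕ (ℤ × ℤ) ≃ ℤ × ℤ where
  toFun := Sum.elim (fun q => (q.2 + q.1, q.2 - q.1 - 1)) (fun q => (q.2 + q.1, q.2 - q.1))
  invFun p :=
    if (p.1 + p.2) % 2 = 0 then .inr ((p.1 - p.2) / 2, (p.1 + p.2) / 2)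
    else .inl ((p.1 - p.2 - 1) / 2, (p.1 + p.2 + 1) / 2)
  left_inv := by
    rintro (⟨k, l⟩ | ⟨k, l⟩)
    · have hodd : (l + k + (l - k - 1)) % 2 ≠ 0 := by omega
      simp only [Sum.elim_inl, hodd, if_false, Sum.inl.injEq, Prod.mk.injEq]
      omega
    · have heven : (l + k + (l - k)) % 2 = 0 := by omega
      simp only [Sum.elim_inr, heven, if_true, Sum.inr.injEq, Prod.mk.injEq]
      omega
  right_inv := by
    rintro ⟨x, y⟩
    by_cases h : (x + y) % 2 = 0
    · simp only [if_pos h, Sum.elim_inr, Prod.mk.injEq]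
      omega
    · simp only [if_neg h, Sum.elim_inl, Prod.mk.injEq]
      omega

theorem tsum_mul_tsum_int_eq_add_by_parity {R : Type*} [NormedRing R] [CompleteSpace R]
    {f g : ℤ → R} (hf : Summable fun n => ‖f n‖) (hg : Summable fun n => ‖g n‖) :
    (∑' n, f n) * (∑' n, g n) =
      (∑' q : ℤ × ℤ, f (q.2 + q.1) * g (q.2 - q.1 - 1)) +
        ∑' q : ℤ × ℤ, f (q.2 + q.1) * g (q.2 - q.1) := by
  have hfg : Summable fun p : ℤ × ℤ => f p.1 * g p.2 := summable_mul_of_summable_norm hf hg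
  have hsplit := hfg.comp_injective Int.prodEquivSumByParity.injective
  rw [tsum_mul_tsum_of_summable_norm hf hg, ← Int.prodEquivSumByParity.tsum_eq]
  exact Summable.tsum_sum (hsplit.comp_injective Sum.inl_injective)
    (hsplit.comp_injective Sum.inr_injective)

noncomputable def thetaMATerm (m a : ℝ) (z τ : ℂ) (n : ℤ) : ℂ :=
  Complex.exp (2 * (Real.pi : ℂ) * I * τ * ((2 * m * n + a) ^ 2 / (4 * m)) +
    2 * (Real.pi : ℂ) * I * z * (2 * m * n + a))

theorem thetaMA_eq_tsum_thetaMATerm (m a : ℝ) (z τ : ℂ) :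
    thetaMA m a z τ = ∑' n, thetaMATerm m a z τ n :=
  rfl

theorem thetaMATerm_eq_mul_jacobiTheta₂_term {m : ℝ} (hm : m ≠ 0) (a : ℝ) (z τ : ℂ) (n : ℤ) :
    thetaMATerm m a z τ n =
      Complex.exp (2 * Real.pi * I * τ * (a ^ 2 / (4 * m)) + 2 * Real.pi * I * z * a) *
        jacobiTheta₂_term n (2 * m * z + a * τ) (2 * m * τ) := by
  have hm' : (m : ℂ) ≠ 0 := ofReal_ne_zero.mpr hm
  rw [thetaMATerm, jacobiTheta₂_term, ← Complex.exp_add]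
  congr 1
  field_simp
  ring

theorem summable_norm_thetaMATerm {m : ℝ} (hm : 0 < m) (a : ℝ) (z : ℂ) {τ : ℂ}
    (hτ : 0 < τ.im) : Summable fun n => ‖thetaMATerm m a z τ n‖ := by
  have h2mτ : 0 < (2 * m * τ).im := by
    simpa [mul_assoc] using mul_pos (mul_pos two_pos hm) hτ
  have hterm := summable_norm_iff.mpr
    ((summable_jacobiTheta₂_term_iff (2 * m * z + a * τ) _).mpr h2mτ)
  simpa only [thetaMATerm_eq_mul_jacobiTheta₂_term hm.ne', norm_mul] using hterm.mul_left _

theorem thetaMA_add_one (m a : ℤ) (z τ : ℂ) : thetaMA m a (z + 1) τ = thetaMA m a z τ := by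
  refine tsum_congr fun n => ?_
  rw [Complex.exp_eq_exp_iff_exists_int]
  exact ⟨2 * m * n + a, by push_cast; ring⟩

theorem jTheta_eq_thetaMA (z τ : ℂ) : jTheta z τ = thetaMA (1 / 2) (1 / 2) (z + 1 / 2) τ := by
  refine tsum_congr fun n => ?_
  congr 1
  push_cast
  ring

theorem thetaMATerm_half_mul_sub_one (u τ : ℂ) (k l : ℤ) :
    thetaMATerm (1 / 2) (1 / 2) u τ (l + k) * thetaMATerm (1 / 2) (1 / 2) u τ (l - k - 1) =
      thetaMATerm 1 1 0 τ k * thetaMATerm 1 0 u τ l := by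
  simp only [thetaMATerm, ← Complex.exp_add]
  congr 1
  push_cast
  ring

theorem thetaMATerm_half_mul (u τ : ℂ) (k l : ℤ) :
    thetaMATerm (1 / 2) (1 / 2) u τ (l + k) * thetaMATerm (1 / 2) (1 / 2) u τ (l - k) =
      thetaMATerm 1 0 0 τ k * thetaMATerm 1 1 u τ l := by
  simp only [thetaMATerm, ← Complex.exp_add]
  congr 1
  push_cast
  ring

theorem thetaMA_half_half_sq (u : ℂ) {τ : ℂ} (hτ : 0 < τ.im) :
    thetaMA (1 / 2) (1 / 2) u τ ^ 2 =
      thetaC 1 1 τ * thetaMA 1 0 u τ + thetaC 1 0 τ * thetaMA 1 1 u τ := by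
  have hsum {m : ℝ} (hm : 0 < m) (a : ℝ) (z : ℂ) := summable_norm_thetaMATerm hm a z hτ
  rw [sq, thetaMA_eq_tsum_thetaMATerm,
    tsum_mul_tsum_int_eq_add_by_parity (hsum one_half_pos _ _) (hsum one_half_pos _ _)]
  simp only [thetaMATerm_half_mul_sub_one, thetaMATerm_half_mul]
  rw [← tsum_mul_tsum_of_summable_norm (hsum one_pos _ _) (hsum one_pos _ _),
    ← tsum_mul_tsum_of_summable_norm (hsum one_pos _ _) (hsum one_pos _ _)]
  rfl

/-- Theta decomposition of `ϑ(z+1/2;τ)²`. -/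
theorem theta_sq_decomposition (τ z : ℂ) (hτ : 0 < τ.im) :
    jTheta (z + 1/2) τ ^ 2 =
      thetaC 1 1 τ * thetaMA 1 0 z τ + thetaC 1 0 τ * thetaMA 1 1 z τ := by
  rw [jTheta_eq_thetaMA, add_assoc, add_halves, thetaMA_half_half_sq _ hτ]
  have h₀ : thetaMA 1 0 (z + 1) τ = thetaMA 1 0 z τ := by exact_mod_cast thetaMA_add_one 1 0 z τ
  have h₁ : thetaMA 1 1 (z + 1) τ = thetaMA 1 1 z τ := by exact_mod_cast thetaMA_add_one 1 1 z τ
  rw [h₀, h₁]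
end

section
/- For integers ℓ ≥ 1, 0 ≤ c < ℓ, and ε ∈ {0,1}: ϑ_{1,ε}(z;τ) ϑ_{ℓ,c}(z;τ) = Σ_{a mod ℓ+1} θ_{ℓ(ℓ+1), (2a+ε)ℓ - c}(τ) ϑ_{ℓ+1, 2a+c+ε}(z;τ). -/
open Complex

/-
Multiply the two theta series and reindex the double sum over `(n₁, n₂) ∈ ℤ²` by
`n₁ = a + ℓ r + s`, `n₂ = s - r` with `a ∈ {0, …, ℓ}` and `r, s ∈ ℤ`; this is a bijection because
`n₁ - n₂ = a + (ℓ + 1) r` is division with remainder by `ℓ + 1`. Completing the square, the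
exponent of each product term splits into a part depending only on `r` (and not on `z`) and a
part depending only on `s`, so for fixed `a` the double sum over `(r, s)` factors as
`θ_{ℓ(ℓ+1), (2a+ε)ℓ-c}(τ) · ϑ_{ℓ+1, 2a+c+ε}(z;τ)`.
-/

noncomputable def thetaTerm (m a : ℝ) (z τ : ℂ) (n : ℤ) : ℂ :=
  Complex.exp (2 * (Real.pi : ℂ) * I * τ * ((2 * m * n + a) ^ 2 / (4 * m)) +
    2 * (Real.pi : ℂ) * I * z * (2 * m * n + a))

theorem thetaTerm_eq_mul_jacobiTheta₂_term {m : ℝ} (hm : m ≠ 0) (a : ℝ) (z τ : ℂ) (n : ℤ) :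
    thetaTerm m a z τ n = Complex.exp ((Real.pi : ℂ) * I * τ * a ^ 2 / (2 * m) +
      2 * (Real.pi : ℂ) * I * z * a) *
      jacobiTheta₂_term n (a * τ + 2 * m * z) (2 * m * τ) := by
  have hm' : (m : ℂ) ≠ 0 := Complex.ofReal_ne_zero.mpr hm
  rw [thetaTerm, jacobiTheta₂_term, ← Complex.exp_add]
  congr 1
  field_simp
  ring

theorem summable_norm_thetaTerm {m : ℝ} (hm : 0 < m) (a : ℝ) (z : ℂ) {τ : ℂ} (hτ : 0 < τ.im) :
    Summable fun n : ℤ => ‖thetaTerm m a z τ n‖ := by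
  have him : 0 < (2 * (m : ℂ) * τ).im := by
    simpa [Complex.mul_im] using mul_pos (mul_pos two_pos hm) hτ
  have hs := summable_norm_iff.mpr <|
    (summable_jacobiTheta₂_term_iff (a * τ + 2 * m * z) _).mpr him
  refine (hs.mul_left ‖Complex.exp ((Real.pi : ℂ) * I * τ * a ^ 2 / (2 * m) +
    2 * (Real.pi : ℂ) * I * z * a)‖).congr fun n => ?_
  rw [thetaTerm_eq_mul_jacobiTheta₂_term hm.ne', norm_mul]

theorem thetaMA_mul_thetaMA {m m' : ℝ} (hm : 0 < m) (hm' : 0 < m') (a a' : ℝ) (z z' : ℂ)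
    {τ : ℂ} (hτ : 0 < τ.im) :
    thetaMA m a z τ * thetaMA m' a' z' τ =
      ∑' p : ℤ × ℤ, thetaTerm m a z τ p.1 * thetaTerm m' a' z' τ p.2 :=
  tsum_mul_tsum_of_summable_norm (summable_norm_thetaTerm hm a z hτ)
    (summable_norm_thetaTerm hm' a' z' hτ)

theorem summable_thetaTerm_mul_thetaTerm {m m' : ℝ} (hm : 0 < m) (hm' : 0 < m') (a a' : ℝ)
    (z z' : ℂ) {τ : ℂ} (hτ : 0 < τ.im) :
    Summable fun p : ℤ × ℤ => thetaTerm m a z τ p.1 * thetaTerm m' a' z' τ p.2 :=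
  summable_mul_of_summable_norm (summable_norm_thetaTerm hm a z hτ)
    (summable_norm_thetaTerm hm' a' z' hτ)

def finProdIntProdEquiv (ℓ : ℕ) : Fin (ℓ + 1) × ℤ × ℤ ≃ ℤ × ℤ where
  toFun p := (p.1 + ℓ * p.2.1 + p.2.2, p.2.2 - p.2.1)
  invFun q :=
    let d := Int.divModEquiv (ℓ + 1) (q.1 - q.2)
    (d.2, d.1, d.1 + q.2)
  left_inv := by
    rintro ⟨a, r, s⟩
    have hd : (a + ℓ * r + s) - (s - r) = (Int.divModEquiv (ℓ + 1)).symm (r, a) := by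
      simp only [Int.divModEquiv_symm_apply]
      push_cast
      ring
    simp only [hd, Equiv.apply_symm_apply, add_sub_cancel]
  right_inv := by
    rintro ⟨n₁, n₂⟩
    have hd := (Int.divModEquiv (ℓ + 1)).symm_apply_apply (n₁ - n₂)
    rw [Int.divModEquiv_symm_apply] at hd
    push_cast at hd
    ext <;> dsimp only <;> linarith

theorem thetaTerm_one_mul_thetaTerm {ℓ : ℕ} (hℓ : ℓ ≠ 0) (a : ℕ) (c ε : ℝ) (z τ : ℂ) (r s : ℤ) :
    thetaTerm 1 ε z τ (a + ℓ * r + s) * thetaTerm ℓ c z τ (s - r) =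
      thetaTerm (ℓ * (ℓ + 1)) ((2 * a + ε) * ℓ - c) 0 τ r *
        thetaTerm (ℓ + 1) (2 * a + c + ε) z τ s := by
  have hℓ₀ : (ℓ : ℂ) ≠ 0 := Nat.cast_ne_zero.mpr hℓ
  have hℓ₁ : (ℓ : ℂ) + 1 ≠ 0 := by exact_mod_cast Nat.succ_ne_zero ℓ
  simp only [thetaTerm, ← Complex.exp_add]
  congr 1
  push_cast
  field_simp
  ring

theorem thetaMA_one_times_thetaMA_general (τ z : ℂ) (hτ : 0 < τ.im) (ℓ c ε : ℕ)
    (hℓ : 1 ≤ ℓ) :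
    thetaMA 1 ε z τ * thetaMA ℓ c z τ =
      ∑ a ∈ Finset.range (ℓ + 1),
        thetaC (ℓ * (ℓ + 1)) ((2 * a + ε) * ℓ - (c : ℝ)) τ *
          thetaMA (ℓ + 1) (2 * (a : ℝ) + c + ε) z τ := by
  have hℓ₀ : (0 : ℝ) < ℓ := by exact_mod_cast hℓ
  have hℓ₁ : (0 : ℝ) < ℓ + 1 := by positivity
  have hsum : Summable fun p => thetaTerm 1 ε z τ (finProdIntProdEquiv ℓ p).1 *
      thetaTerm ℓ c z τ (finProdIntProdEquiv ℓ p).2 := (finProdIntProdEquiv ℓ).summable_iff.mpr <|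
    summable_thetaTerm_mul_thetaTerm one_pos hℓ₀ ε c z z hτ
  rw [thetaMA_mul_thetaMA one_pos hℓ₀ _ _ _ _ hτ, ← (finProdIntProdEquiv ℓ).tsum_eq,
    hsum.tsum_prod' fun a => hsum.comp_injective (Prod.mk_right_injective a), tsum_fintype,
    ← Fin.sum_univ_eq_sum_range]
  refine Finset.sum_congr rfl fun a _ => ?_
  rw [thetaC, thetaMA_mul_thetaMA (mul_pos hℓ₀ hℓ₁) hℓ₁ _ _ _ _ hτ]
  exact tsum_congr fun q => thetaTerm_one_mul_thetaTerm (by omega) a c ε z τ q.1 q.2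

/-- Lemma 3.4: theta decomposition of `ϑ_{1,ε}(z;τ) ϑ_{ℓ,c}(z;τ)`. -/
theorem thetaMA_one_times_thetaMA (τ z : ℂ) (hτ : 0 < τ.im) (ℓ c ε : ℕ)
    (hℓ : 1 ≤ ℓ) (hc : c < ℓ) (hε : ε = 0 ∨ ε = 1) :
    thetaMA 1 ε z τ * thetaMA ℓ c z τ =
      ∑ a ∈ Finset.range (ℓ + 1),
        thetaC (ℓ * (ℓ + 1)) ((2 * a + ε) * ℓ - (c : ℝ)) τ *
          thetaMA (ℓ + 1) (2 * (a : ℝ) + c + ε) z τ :=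
  thetaMA_one_times_thetaMA_general τ z hτ ℓ c ε hℓ
end

section
/- Theta relation: θ_{2,2}(τ) θ_{6,4}(τ) + θ_{2,0}(τ) θ_{6,2}(τ) = θ_{2,1}(τ)(θ_{6,1}(τ) + θ_{6,5}(τ)). -/
open Complex

/-!
Writing `x = 4n + a`, `y = 12k + b`, the product `θ_{2,a} θ_{6,b}` is the sum of
`q^{(3x² + y²)/24}` over `x ≡ a (mod 4)`, `y ≡ b (mod 12)`. The involution
`(x, y) ↦ ((x + y)/2, (3x - y)/2)` of `{x ≡ y (mod 2)}` preserves `3x² + y²`. Splitting each of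
the four double sums by the parity of `n ∓ k`, this involution, corrected by signs of `x` and `y`,
carries the two pieces of `θ_{2,2} θ_{6,4}` and of `θ_{2,0} θ_{6,2}` onto the two pieces of
`θ_{2,1} θ_{6,1}` and of `θ_{2,1} θ_{6,5}`.
-/

lemma Summable.tsum_eq_add_of_sumEquiv {α β γ E : Type*} [NormedAddCommGroup E] [CompleteSpace E]
    (e : α ⊕ β ≃ γ) {f : γ → E} (hf : Summable f) :
    ∑' c, f c = ∑' a, f (e (.inl a)) + ∑' b, f (e (.inr b)) := by
  have hfe : Summable (f ∘ e) := e.summable_iff.mpr hf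
  rw [← e.tsum_eq f]
  exact Summable.tsum_sum (hfe.comp_injective Sum.inl_injective)
    (hfe.comp_injective Sum.inr_injective)

lemma summable_norm_thetaC_term {m : ℝ} (hm : 0 < m) (a : ℝ) {τ : ℂ} (hτ : 0 < τ.im) :
    Summable fun n : ℤ =>
      ‖cexp (2 * (Real.pi : ℂ) * I * τ * ((2 * m * n + a) ^ 2 / (4 * m)))‖ := by
  have hm' : (m : ℂ) ≠ 0 := by exact_mod_cast hm.ne'
  -- completing the square turns the term into a Jacobi theta term with modulus `2mτ`
  have hterm : ∀ n : ℤ,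
      cexp (2 * (Real.pi : ℂ) * I * τ * ((2 * m * n + a) ^ 2 / (4 * m))) =
        cexp (2 * (Real.pi : ℂ) * I * τ * (a ^ 2 / (4 * m))) *
          jacobiTheta₂_term n (a * τ) (2 * m * τ) := by
    intro n
    rw [jacobiTheta₂_term, ← Complex.exp_add]
    congr 1
    field_simp
    ring
  simp only [hterm, norm_mul]
  refine .mul_left _ (summable_norm_iff.mpr ((summable_jacobiTheta₂_term_iff _ _).mpr ?_))
  simpa [Complex.mul_im] using mul_pos (mul_pos two_pos hm) hτ

noncomputable def thetaProdTerm (m a m' b : ℝ) (τ : ℂ) (p : ℤ × ℤ) : ℂ :=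
  cexp (2 * (Real.pi : ℂ) * I * τ *
    ((2 * m * p.1 + a) ^ 2 / (4 * m) + (2 * m' * p.2 + b) ^ 2 / (4 * m')))

lemma hasSum_thetaProdTerm {m m' : ℝ} (hm : 0 < m) (hm' : 0 < m') (a b : ℝ) {τ : ℂ}
    (hτ : 0 < τ.im) :
    HasSum (thetaProdTerm m a m' b τ) (thetaC m a τ * thetaC m' b τ) := by
  have hf := summable_norm_thetaC_term hm a hτ
  have hg := summable_norm_thetaC_term hm' b hτ
  have hfg := summable_mul_of_summable_norm hf hg
  have hprod := hf.of_norm.hasSum.mul hg.of_norm.hasSum hfg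
  simp only [thetaC, thetaMA, mul_zero, zero_mul, add_zero]
  refine hprod.congr_fun fun p => ?_
  rw [thetaProdTerm, ← Complex.exp_add, mul_add]

lemma thetaProdTerm_two_six_eq {a b a' b' : ℝ} {τ : ℂ} {p p' : ℤ × ℤ}
    (h : 3 * (4 * (p.1 : ℝ) + a) ^ 2 + (12 * p.2 + b) ^ 2 =
      3 * (4 * (p'.1 : ℝ) + a') ^ 2 + (12 * p'.2 + b') ^ 2) :
    thetaProdTerm 2 a 6 b τ p = thetaProdTerm 2 a' 6 b' τ p' := by
  have hC := congrArg ((↑) : ℝ → ℂ) h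
  push_cast at hC
  rw [thetaProdTerm, thetaProdTerm]
  congr 1
  push_cast
  linear_combination (2 * (Real.pi : ℂ) * I * τ / 24) * hC

-- The parametrizations below are chosen so that the pieces of the two sides match termwise.
def evenOddSubEquiv : (ℤ × ℤ) ⊕ (ℤ × ℤ) ≃ ℤ × ℤ where
  toFun := Sum.elim (fun p => (2 * p.1 + p.2, p.2)) (fun p => (2 * p.1 + p.2 + 1, p.2))
  invFun p := if (p.1 - p.2) % 2 = 0 then .inl ((p.1 - p.2) / 2, p.2)
    else .inr ((p.1 - p.2 - 1) / 2, p.2)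
  left_inv := by rintro (_ | _) <;> grind
  right_inv := by grind

def evenOddAddEquiv : (ℤ × ℤ) ⊕ (ℤ × ℤ) ≃ ℤ × ℤ where
  toFun := Sum.elim (fun p => (p.1 + 2 * p.2, -p.1)) (fun p => (-p.1 - 2 * p.2 - 1, p.1))
  invFun p := if (p.1 + p.2) % 2 = 0 then .inl (-p.2, (p.1 + p.2) / 2)
    else .inr (p.2, (-p.1 - p.2 - 1) / 2)
  left_inv := by rintro (_ | _) <;> grind
  right_inv := by grind

def evenOddAddEquiv' : (ℤ × ℤ) ⊕ (ℤ × ℤ) ≃ ℤ × ℤ where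
  toFun := Sum.elim (fun p => (p.1 + 2 * p.2 + 1, -p.1 - 1)) (fun p => (-p.1 - 2 * p.2 - 1, p.1))
  invFun p := if (p.1 + p.2) % 2 = 0 then .inl (-p.2 - 1, (p.1 + p.2) / 2)
    else .inr (p.2, (-p.1 - p.2 - 1) / 2)
  left_inv := by rintro (_ | _) <;> grind
  right_inv := by grind

lemma thetaProdTerm_evenOdd_pieces (τ : ℂ) :
    (∀ p, thetaProdTerm 2 2 6 4 τ (evenOddSubEquiv (.inl p)) =
      thetaProdTerm 2 1 6 1 τ (evenOddAddEquiv (.inr p))) ∧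
    (∀ p, thetaProdTerm 2 2 6 4 τ (evenOddSubEquiv (.inr p)) =
      thetaProdTerm 2 1 6 5 τ (evenOddAddEquiv' (.inl p))) ∧
    (∀ p, thetaProdTerm 2 0 6 2 τ (evenOddSubEquiv (.inl p)) =
      thetaProdTerm 2 1 6 1 τ (evenOddAddEquiv (.inl p))) ∧
    (∀ p, thetaProdTerm 2 0 6 2 τ (evenOddSubEquiv (.inr p)) =
      thetaProdTerm 2 1 6 5 τ (evenOddAddEquiv' (.inr p))) := by
  refine ⟨fun p => ?_, fun p => ?_, fun p => ?_, fun p => ?_⟩ <;>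
  · apply thetaProdTerm_two_six_eq
    simp only [evenOddSubEquiv, evenOddAddEquiv, evenOddAddEquiv', Equiv.coe_fn_mk,
      Sum.elim_inl, Sum.elim_inr]
    push_cast
    ring

/-- Theta relation (3.13). -/
theorem theta_relation_B (τ : ℂ) (hτ : 0 < τ.im) :
    thetaC 2 2 τ * thetaC 6 4 τ + thetaC 2 0 τ * thetaC 6 2 τ =
      thetaC 2 1 τ * (thetaC 6 1 τ + thetaC 6 5 τ) := by
  have hsum (a b : ℝ) := hasSum_thetaProdTerm two_pos (by norm_num : (0 : ℝ) < 6) a b hτ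
  have hsplit (a b : ℝ) (e : (ℤ × ℤ) ⊕ (ℤ × ℤ) ≃ ℤ × ℤ) :=
    (hsum a b).summable.tsum_eq_add_of_sumEquiv e
  rw [mul_add, ← (hsum 2 4).tsum_eq, ← (hsum 0 2).tsum_eq, ← (hsum 1 1).tsum_eq,
    ← (hsum 1 5).tsum_eq, hsplit 2 4 evenOddSubEquiv, hsplit 0 2 evenOddSubEquiv,
    hsplit 1 1 evenOddAddEquiv, hsplit 1 5 evenOddAddEquiv']
  obtain ⟨h₁, h₂, h₃, h₄⟩ := thetaProdTerm_evenOdd_pieces τ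
  simp only [h₁, h₂, h₃, h₄]
  ring
end

section
/- Lattice identity underlying Lemma 3.3: Σ over pairs (R,S) ∈ ℤ² with R ≢ S (mod 2) of x^{2R² + 6S²} equals 2·Σ over pairs (j,k) ∈ ℤ² of x^{8(j+1/4)² + 24(k+1/4)²}, for any complex x with |x| < 1. -/
open Complex

/-! For `R + S` odd, `u = R + 3S` and `v = R - S` are odd and congruent mod 4, and
`2R² + 6S² = (u² + 3v²) / 2`. So exactly one of `±(u, v)` has the form `(4j + 1, 4k + 1)`,
which gives a two-to-one parametrisation of the odd pairs by `(j, k) ∈ ℤ²`, and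
`(u² + 3v²) / 2 = 8(j + 1/4)² + 24(k + 1/4)²`. -/

theorem Summable.tsum_bool_prod_snd {α M : Type*} [AddCommMonoid M] [TopologicalSpace M]
    [ContinuousAdd M] [T2Space M] {f : α → M} (hf : Summable f) :
    ∑' q : Bool × α, f q.2 = ∑' a, f a + ∑' a, f a := by
  rw [← (Equiv.boolProdEquivSum α).symm.tsum_eq]
  exact Summable.tsum_sum (f := fun q => f ((Equiv.boolProdEquivSum α).symm q).2) hf hf

theorem summable_pow_natAbs {r : ℝ} (hr₀ : 0 ≤ r) (hr : r < 1) :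
    Summable fun n : ℤ => r ^ n.natAbs := by
  have h := summable_geometric_of_lt_one hr₀ hr
  exact .of_nat_of_neg (by simpa using h) (by simpa using h)

theorem summable_zpow_of_abs_add_abs_le {𝕜 : Type*} [NormedDivisionRing 𝕜] [CompleteSpace 𝕜]
    {x : 𝕜} (hx : ‖x‖ < 1) {e : ℤ × ℤ → ℤ} (he : ∀ p, |p.1| + |p.2| ≤ e p) :
    Summable fun p => x ^ e p := by
  have h := summable_pow_natAbs (norm_nonneg x) hx
  refine .of_norm_bounded (h.mul_of_nonneg h (fun _ => by positivity) fun _ => by positivity)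
    fun p => ?_
  have hp := he p
  rw [Int.abs_eq_natAbs, Int.abs_eq_natAbs] at hp
  have hlift : e p = ((e p).toNat : ℤ) := by omega
  rw [norm_zpow, hlift, zpow_natCast, ← pow_add]
  exact pow_le_pow_of_le_one (norm_nonneg x) hx.le (by omega)

def shiftedQuadForm (p : ℤ × ℤ) : ℤ := 8 * p.1 ^ 2 + 4 * p.1 + 24 * p.2 ^ 2 + 12 * p.2 + 2

theorem shiftedQuadForm_cast (p : ℤ × ℤ) :
    (shiftedQuadForm p : ℂ) = 8 * ((p.1 : ℂ) + 1/4) ^ 2 + 24 * ((p.2 : ℂ) + 1/4) ^ 2 := by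
  simp only [shiftedQuadForm]; push_cast; ring

theorem abs_add_abs_le_shiftedQuadForm (p : ℤ × ℤ) : |p.1| + |p.2| ≤ shiftedQuadForm p := by
  obtain ⟨j, k⟩ := p
  simp only [shiftedQuadForm]
  rcases abs_cases j with ⟨hj, _⟩ | ⟨hj, _⟩ <;> rcases abs_cases k with ⟨hk, _⟩ | ⟨hk, _⟩ <;>
    rw [hj, hk] <;> nlinarith [sq_nonneg (4 * j + 1), sq_nonneg (4 * k + 1)]

/-- `(true, j, k) ↦ (R, S)` with `(R + 3S, R - S) = (4j + 1, 4k + 1)`; `false` negates `(R, S)`. -/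
def oddPairEquiv : Bool × (ℤ × ℤ) ≃ {p : ℤ × ℤ // (p.1 + p.2) % 2 ≠ 0} where
  toFun q :=
    if q.1 then ⟨(q.2.1 + 3 * q.2.2 + 1, q.2.1 - q.2.2), by omega⟩
    else ⟨(-q.2.1 - 3 * q.2.2 - 1, q.2.2 - q.2.1), by omega⟩
  invFun p :=
    if (p.1.1 + 3 * p.1.2) % 4 = 1 then
      (true, ((p.1.1 + 3 * p.1.2 - 1) / 4, (p.1.1 - p.1.2 - 1) / 4))
    else
      (false, ((-p.1.1 - 3 * p.1.2 - 1) / 4, (p.1.2 - p.1.1 - 1) / 4))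
  left_inv := by
    rintro ⟨_ | _, j, k⟩ <;> simp only [Bool.false_eq_true, reduceIte] <;> split_ifs <;>
      simp_all <;> omega
  right_inv := by
    rintro ⟨⟨R, S⟩, hp⟩
    by_cases h : (R + 3 * S) % 4 = 1 <;> simp only [h, reduceIte] <;> ext <;> simp <;> omega

theorem oddPairEquiv_quadForm (q : Bool × (ℤ × ℤ)) :
    2 * (oddPairEquiv q : ℤ × ℤ).1 ^ 2 + 6 * (oddPairEquiv q : ℤ × ℤ).2 ^ 2
      = shiftedQuadForm q.2 := by
  obtain ⟨_ | _, j, k⟩ := q <;> simp only [oddPairEquiv, shiftedQuadForm, Equiv.coe_fn_mk,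
    Bool.false_eq_true, reduceIte] <;> ring

/-- Lattice identity underlying Lemma 3.5. -/
theorem lattice_identity (x : ℂ) (hx : ‖x‖ < 1) :
    (∑' p : {p : ℤ × ℤ // (p.1 + p.2) % 2 ≠ 0},
        x ^ (2 * (p : ℤ × ℤ).1 ^ 2 + 6 * (p : ℤ × ℤ).2 ^ 2)) =
      2 * ∑' p : ℤ × ℤ,
        x ^ ((8 * ((p.1 : ℂ) + 1/4) ^ 2 + 24 * ((p.2 : ℂ) + 1/4) ^ 2)) := by
  have hsum : Summable fun p => x ^ shiftedQuadForm p :=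
    summable_zpow_of_abs_add_abs_le hx abs_add_abs_le_shiftedQuadForm
  calc _ = ∑' q : Bool × (ℤ × ℤ), x ^ shiftedQuadForm q.2 := by
        simp only [← oddPairEquiv.tsum_eq, oddPairEquiv_quadForm]
    _ = 2 * ∑' p : ℤ × ℤ, x ^ shiftedQuadForm p := by rw [hsum.tsum_bool_prod_snd, two_mul]
    _ = _ := by simp only [← shiftedQuadForm_cast, cpow_intCast]
end

section
/- Change-of-parity lattice identity: Σ_{(R,S) ∈ ℤ², R ≢ S mod 2} x^{2R²+6S²} = Σ_{(r,s) ∈ (1/2+ℤ)², r ≡ s mod 2} x^{2r²+6s²}, for |x| < 1, via the bijection s = (R+S)/2, r = (R-3S)/2. (Here r ≡ s mod 2 means r - s ∈ 2ℤ.) -/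
open Complex

/-- `(R, S) ↦ (r, s) = ((R - 3S)/2, (R + S)/2)`, with the half-odd-integers `r, s` stored as
`r - 1/2, s - 1/2 ∈ ℤ`. -/
def changeOfParityEquiv :
    {p : ℤ × ℤ // (p.1 + p.2) % 2 ≠ 0} ≃ {p : ℤ × ℤ // (p.1 - p.2) % 2 = 0} where
  toFun p := ⟨((p.1.1 - 3 * p.1.2 - 1) / 2, (p.1.1 + p.1.2 - 1) / 2), by have := p.2; omega⟩
  invFun p := ⟨((p.1.1 + 3 * p.1.2 + 2) / 2, (p.1.2 - p.1.1) / 2), by have := p.2; omega⟩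
  left_inv p := by
    have := p.2
    ext <;> simp only <;> omega
  right_inv p := by
    have := p.2
    ext <;> simp only <;> omega

theorem intCast_sub_one_ediv_two_add_half {K : Type*} [Field K] [NeZero (2 : K)] {n : ℤ}
    (hn : n % 2 = 1) : (((n - 1) / 2 : ℤ) : K) + 1 / 2 = n / 2 := by
  have hdiv : 2 * ((n - 1) / 2) + 1 = n := by omega
  have hcast : 2 * (((n - 1) / 2 : ℤ) : K) + 1 = n := by
    simpa only [Int.cast_add, Int.cast_mul, Int.cast_ofNat, Int.cast_one] using
      congrArg (Int.cast (R := K)) hdiv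
  field_simp
  linear_combination hcast

theorem two_mul_sq_add_six_mul_sq_change_of_parity {K : Type*} [Field K] [NeZero (2 : K)]
    (R S : K) : 2 * ((R - 3 * S) / 2) ^ 2 + 6 * ((R + S) / 2) ^ 2 = 2 * R ^ 2 + 6 * S ^ 2 := by
  field_simp
  ring

theorem change_of_parity_lattice_general (x : ℂ) :
    (∑' p : {p : ℤ × ℤ // (p.1 + p.2) % 2 ≠ 0},
        x ^ (2 * (p : ℤ × ℤ).1 ^ 2 + 6 * (p : ℤ × ℤ).2 ^ 2)) =
      ∑' p : {p : ℤ × ℤ // (p.1 - p.2) % 2 = 0},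
        x ^ ((2 * (((p : ℤ × ℤ).1 : ℂ) + 1/2) ^ 2 + 6 * (((p : ℤ × ℤ).2 : ℂ) + 1/2) ^ 2)) := by
  rw [← changeOfParityEquiv.tsum_eq]
  refine tsum_congr fun ⟨⟨R, S⟩, hRS⟩ => ?_
  have hr : (R - 3 * S) % 2 = 1 := by simp only at hRS; omega
  have hs : (R + S) % 2 = 1 := by simp only at hRS; omega
  simp only [changeOfParityEquiv, Equiv.coe_fn_mk]
  rw [intCast_sub_one_ediv_two_add_half hr, intCast_sub_one_ediv_two_add_half hs]
  push_cast
  rw [two_mul_sq_add_six_mul_sq_change_of_parity, ← cpow_intCast]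
  norm_cast

/-- Change-of-parity lattice identity: summing over half-odd-integer pairs `(r,s) = (j+1/2,k+1/2)`
with `r ≡ s (mod 2)`, i.e. `r - s ∈ 2ℤ`. -/
theorem change_of_parity_lattice (x : ℂ) (hx : ‖x‖ < 1) :
    (∑' p : {p : ℤ × ℤ // (p.1 + p.2) % 2 ≠ 0},
        x ^ (2 * (p : ℤ × ℤ).1 ^ 2 + 6 * (p : ℤ × ℤ).2 ^ 2)) =
      ∑' p : {p : ℤ × ℤ // (p.1 - p.2) % 2 = 0},
        x ^ ((2 * (((p : ℤ × ℤ).1 : ℂ) + 1/2) ^ 2 + 6 * (((p : ℤ × ℤ).2 : ℂ) + 1/2) ^ 2)) :=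
  change_of_parity_lattice_general x
end

section
/- The generating function for 2-colored generalized Frobenius partitions satisfies CΦ₂(q) = (q²;q⁴)_∞ / ((q;q²)_∞⁴ (q⁴;q⁴)_∞), where CΦ₂(q) is the constant term in ζ of (-ζq; q)_∞² (-ζ^{-1}; q)_∞². -/
open Complex

open Filter Topology Finset

/-!
By the Jacobi triple product, `(-ζq;q)_∞ (-ζ⁻¹;q)_∞ = (q;q)_∞⁻¹ ∑ₙ q^{n(n+1)/2} ζⁿ`, so the constant
term of the square is `(q;q)_∞⁻² ∑ₙ q^{n(n+1)/2} q^{n(n-1)/2} = (q;q)_∞⁻² ∑ₙ q^{n²}`. The triple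
product with `q ↦ q²`, `ζ = q⁻¹` gives `∑ₙ q^{n²} = (-q;q²)_∞² (q²;q²)_∞`, and splitting
`(q;q)_∞ = (q;q²)_∞ (q²;q²)_∞`, `(q²;q²)_∞ = (q²;q⁴)_∞ (q⁴;q⁴)_∞`, `(q²;q⁴)_∞ = (q;q²)_∞ (-q;q²)_∞`
turns the quotient into the stated one.

The triple product itself is the limit `N → ∞` of its finite form
`∏_{j<N} (1 + ζq^{j+1})(1 + ζ⁻¹q^j) = ∑_{|n| ≤ N} [2N, N+n]_q q^{n(n+1)/2} ζⁿ`, whose Gaussian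
binomial coefficients tend to `(q;q)_∞⁻¹` and are uniformly bounded, so that Tannery's theorem
applies.
-/

lemma triangle_succ (n : ℤ) : (n + 1) * (n + 1 + 1) / 2 = n * (n + 1) / 2 + (n + 1) := by
  rw [show (n + 1) * (n + 1 + 1) = n * (n + 1) + (n + 1) * 2 by ring,
    Int.add_mul_ediv_right _ _ two_ne_zero]

lemma triangle_neg (n : ℤ) : -n * (-n + 1) / 2 = n * (n + 1) / 2 - n := by
  rw [show -n * (-n + 1) = n * (n + 1) + (-n) * 2 by ring,
    Int.add_mul_ediv_right _ _ two_ne_zero, sub_eq_add_neg]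

lemma two_mul_triangle_sub (n : ℤ) : 2 * (n * (n + 1) / 2) - n = n * n := by
  rw [Int.two_mul_ediv_two_of_even (Int.even_mul_succ_self n)]
  ring

lemma zpow_triangle_mul_zpow_triangle_neg {G : Type*} [GroupWithZero G] {q : G} (hq0 : q ≠ 0)
    (n : ℤ) : q ^ (n * (n + 1) / 2) * q ^ (-n * (-n + 1) / 2) = q ^ (n * n) := by
  rw [← zpow_add₀ hq0, triangle_neg, ← two_mul_triangle_sub]
  ring_nf

lemma summable_zpow_triangle_mul_zpow {r s : ℝ} (hr0 : 0 < r) (hr1 : r < 1) (hs : 0 < s) :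
    Summable fun n : ℤ ↦ r ^ (n * (n + 1) / 2) * s ^ n := by
  have hnat {t : ℝ} (ht : 0 < t) : Summable fun k : ℕ ↦ r ^ ((k : ℤ) * (k + 1) / 2) * t ^ k := by
    refine summable_of_ratio_test_tendsto_lt_one zero_lt_one
      (Eventually.of_forall fun k ↦ by positivity) ?_
    have hratio (k : ℕ) : ‖r ^ (((k + 1 : ℕ) : ℤ) * ((k + 1 : ℕ) + 1) / 2) * t ^ (k + 1)‖
        / ‖r ^ ((k : ℤ) * (k + 1) / 2) * t ^ k‖ = r ^ (k + 1) * t := by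
      rw [Nat.cast_succ, triangle_succ, zpow_add₀ hr0.ne', ← Nat.cast_succ, zpow_natCast,
        Real.norm_of_nonneg (by positivity), Real.norm_of_nonneg (by positivity)]
      field_simp
      ring
    simp_rw [hratio]
    simpa using ((tendsto_pow_atTop_nhds_zero_of_lt_one hr0.le hr1).comp
      (tendsto_add_atTop_nat 1)).mul_const t
  refine Summable.of_nat_of_neg ((hnat hs).congr fun k ↦ by simp) ?_
  refine (hnat (inv_pos.2 (mul_pos hr0 hs))).congr fun k ↦ ?_
  rw [triangle_neg, zpow_sub₀ hr0.ne', zpow_neg, zpow_natCast, zpow_natCast, inv_pow, mul_pow]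
  field_simp

section GaussianBinomial

variable {K : Type*} [Field K] {q : K}

def qFactorial (q : K) (n : ℕ) : K := ∏ i ∈ range n, (1 - q ^ (i + 1))

/-- Indexed by `k : ℤ` and zero outside `[0, m]`, so that the recurrences below hold for all `k`. -/
def qBinomial (q : K) (m : ℕ) (k : ℤ) : K :=
  if 0 ≤ k ∧ k ≤ m then qFactorial q m / (qFactorial q k.toNat * qFactorial q (m - k).toNat)
  else 0

@[simp]
lemma qFactorial_zero : qFactorial q 0 = 1 := prod_range_zero _

lemma qFactorial_succ (n : ℕ) : qFactorial q (n + 1) = qFactorial q n * (1 - q ^ (n + 1)) :=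
  prod_range_succ _ n

lemma qFactorial_ne_zero (hq : ∀ n : ℕ, q ^ (n + 1) ≠ 1) (n : ℕ) : qFactorial q n ≠ 0 :=
  prod_ne_zero_iff.2 fun i _ ↦ sub_ne_zero.2 (hq i).symm

lemma qBinomial_of_lt_zero {m : ℕ} {k : ℤ} (hk : k < 0) : qBinomial q m k = 0 :=
  if_neg (by omega)

lemma qBinomial_of_lt {m : ℕ} {k : ℤ} (hk : (m : ℤ) < k) : qBinomial q m k = 0 :=
  if_neg (by omega)

lemma qBinomial_sub_right (m : ℕ) (k : ℤ) : qBinomial q m (m - k) = qBinomial q m k := by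
  unfold qBinomial
  rw [sub_sub_cancel, mul_comm (qFactorial q _)]
  exact if_congr (by omega) rfl rfl

variable (hq : ∀ n : ℕ, q ^ (n + 1) ≠ 1)
include hq

lemma qBinomial_zero_right (m : ℕ) : qBinomial q m 0 = 1 := by
  rw [qBinomial, if_pos (by omega)]
  simp [div_self (qFactorial_ne_zero hq m)]

lemma qBinomial_self (m : ℕ) : qBinomial q m m = 1 := by
  simpa using (qBinomial_sub_right m 0).trans (qBinomial_zero_right hq m)

lemma qBinomial_succ (m : ℕ) (k : ℤ) :
    qBinomial q (m + 1) k = qBinomial q m k + q ^ ((m : ℤ) + 1 - k) * qBinomial q m (k - 1) := by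
  rcases lt_trichotomy k 0 with hk | rfl | hk
  · simp [qBinomial_of_lt_zero hk, qBinomial_of_lt_zero (by omega : k - 1 < 0)]
  · simp [qBinomial_zero_right hq, qBinomial_of_lt_zero (by norm_num : (-1 : ℤ) < 0)]
  rcases lt_trichotomy k (m + 1) with hkm | rfl | hkm
  · obtain ⟨j, i, rfl, rfl⟩ : ∃ j i : ℕ, k = j + 1 ∧ m = i + j + 1 :=
      ⟨k.toNat - 1, m - k.toNat, by omega, by omega⟩
    rw [show ((i + j + 1 : ℕ) : ℤ) + 1 - (j + 1) = ((i + 1 : ℕ) : ℤ) by push_cast; ring,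
      zpow_natCast, qBinomial, qBinomial, qBinomial, if_pos (by omega), if_pos (by omega),
      if_pos (by omega), show ((j : ℤ) + 1).toNat = j + 1 by omega,
      show ((j : ℤ) + 1 - 1).toNat = j by omega,
      show (((i + j + 1 + 1 : ℕ) : ℤ) - (j + 1)).toNat = i + 1 by omega,
      show (((i + j + 1 : ℕ) : ℤ) - (j + 1)).toNat = i by omega,
      show (((i + j + 1 : ℕ) : ℤ) - (j + 1 - 1)).toNat = i + 1 by omega,
      qFactorial_succ (i + j + 1), qFactorial_succ i, qFactorial_succ j]
    -- `1 - q^(i+j+2) = (1 - q^(i+1)) + q^(i+1) (1 - q^(j+1))`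
    have := qFactorial_ne_zero hq i
    have := qFactorial_ne_zero hq j
    have := qFactorial_ne_zero hq (i + j + 1)
    have := sub_ne_zero.2 (hq i).symm
    have := sub_ne_zero.2 (hq j).symm
    field_simp
    ring
  · rw [qBinomial_of_lt (by omega : (m : ℤ) < m + 1), add_sub_cancel_right, sub_self, zpow_zero,
      one_mul, qBinomial_self hq, zero_add]
    exact_mod_cast qBinomial_self hq (m + 1)
  · simp [qBinomial_of_lt hkm, qBinomial_of_lt (by omega : (m : ℤ) < k),
      qBinomial_of_lt (by omega : (m : ℤ) < k - 1)]

lemma qBinomial_succ' (m : ℕ) (k : ℤ) :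
    qBinomial q (m + 1) k = q ^ k * qBinomial q m k + qBinomial q m (k - 1) := by
  rw [← qBinomial_sub_right (m + 1) k, ← qBinomial_sub_right m k, ← qBinomial_sub_right m (k - 1),
    qBinomial_succ hq]
  push_cast
  ring_nf

lemma qBinomial_central_succ (hq0 : q ≠ 0) (N : ℕ) (n : ℤ) :
    qBinomial q (2 * N + 2) (N + 1 + n) =
      (1 + q ^ (2 * N + 1)) * qBinomial q (2 * N) (N + n)
        + q ^ ((N : ℤ) + 1 + n) * qBinomial q (2 * N) (N + n + 1)
        + q ^ ((N : ℤ) + 1 - n) * qBinomial q (2 * N) (N + n - 1) := by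
  have hexp : q ^ ((N : ℤ) + 1 - n) * q ^ ((N : ℤ) + n) = q ^ (2 * N + 1) := by
    rw [← zpow_add₀ hq0, ← zpow_natCast]; push_cast; ring_nf
  rw [qBinomial_succ hq (2 * N + 1), qBinomial_succ' hq, qBinomial_succ' hq]
  push_cast
  ring_nf at hexp ⊢
  linear_combination qBinomial q (N * 2) (N + n) * hexp

def tripleProductCoeff (q : K) (N : ℕ) (n : ℤ) : K :=
  qBinomial q (2 * N) (N + n) * q ^ (n * (n + 1) / 2)

lemma tripleProductCoeff_succ (hq0 : q ≠ 0) (N : ℕ) (n : ℤ) :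
    tripleProductCoeff q (N + 1) n = (1 + q ^ (2 * N + 1)) * tripleProductCoeff q N n
      + q ^ (N + 1) * tripleProductCoeff q N (n - 1) + q ^ N * tripleProductCoeff q N (n + 1) := by
  have hdown : q ^ ((N : ℤ) + 1 - n) * q ^ (n * (n + 1) / 2)
      = q ^ (N + 1) * q ^ ((n - 1) * (n - 1 + 1) / 2) := by
    have := triangle_succ (n - 1)
    rw [sub_add_cancel] at this
    rw [← zpow_natCast, ← zpow_add₀ hq0, ← zpow_add₀ hq0, this]
    push_cast; ring_nf
  have hup : q ^ ((N : ℤ) + 1 + n) * q ^ (n * (n + 1) / 2)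
      = q ^ N * q ^ ((n + 1) * (n + 1 + 1) / 2) := by
    rw [← zpow_natCast, ← zpow_add₀ hq0, ← zpow_add₀ hq0, triangle_succ]
    ring_nf
  simp only [tripleProductCoeff]
  rw [show 2 * (N + 1) = 2 * N + 2 by ring,
    show ((N + 1 : ℕ) : ℤ) + n = N + 1 + n by push_cast; ring, qBinomial_central_succ hq hq0,
    show (N : ℤ) + (n - 1) = N + n - 1 by ring,
    show (N : ℤ) + (n + 1) = N + n + 1 by ring]
  linear_combination qBinomial q (2 * N) (N + n - 1) * hdown
    + qBinomial q (2 * N) (N + n + 1) * hup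

theorem hasSum_tripleProductCoeff_mul_zpow [TopologicalSpace K] [IsTopologicalRing K]
    (hq0 : q ≠ 0) {ζ : K} (hζ : ζ ≠ 0) (N : ℕ) :
    HasSum (fun n : ℤ ↦ tripleProductCoeff q N n * ζ ^ n)
      (∏ j ∈ range N, (1 + ζ * q ^ (j + 1)) * (1 + ζ⁻¹ * q ^ j)) := by
  induction N with
  | zero =>
    convert hasSum_single (0 : ℤ) fun n hn ↦ ?_
    · simp [tripleProductCoeff, qBinomial_zero_right hq]
    · rcases lt_or_gt_of_ne hn with h | h
      · rw [tripleProductCoeff, qBinomial_of_lt_zero (by omega), zero_mul, zero_mul]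
      · rw [tripleProductCoeff, qBinomial_of_lt (by omega), zero_mul, zero_mul]
  | succ N ih =>
    have shift (d : ℤ) {f : ℤ → K} {s : K} (h : HasSum f s) : HasSum (fun n ↦ f (n - d)) s :=
      (Equiv.subRight d).hasSum_iff.mpr h
    set P := ∏ j ∈ range N, (1 + ζ * q ^ (j + 1)) * (1 + ζ⁻¹ * q ^ j)
    have hP : P * ((1 + ζ * q ^ (N + 1)) * (1 + ζ⁻¹ * q ^ N))
        = (1 + q ^ (2 * N + 1)) * P + P * (ζ * q ^ (N + 1)) + P * (ζ⁻¹ * q ^ N) := by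
      field_simp
      ring
    rw [prod_range_succ, hP]
    refine ((ih.mul_left _).add (shift 1 (ih.mul_right _))).add (shift (-1) (ih.mul_right _))
      |>.congr_fun fun n ↦ ?_
    rw [tripleProductCoeff_succ hq hq0, sub_neg_eq_add, zpow_sub_one₀ hζ, zpow_add_one₀ hζ]
    field_simp

end GaussianBinomial

section QPochhammer

variable {q : ℂ} (hq : ‖q‖ < 1)
include hq

lemma norm_pow_lt_one {n : ℕ} (hn : n ≠ 0) : ‖q ^ n‖ < 1 := by
  rw [norm_pow]
  exact pow_lt_one₀ (norm_nonneg q) hq hn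

lemma pow_succ_ne_one_of_norm_lt_one (n : ℕ) : q ^ (n + 1) ≠ 1 := fun h ↦ by
  simpa [h] using norm_pow_lt_one hq n.succ_ne_zero

lemma summable_norm_mul_pow (a : ℂ) : Summable fun n : ℕ ↦ ‖a * q ^ n‖ := by
  simpa [norm_mul, norm_pow] using
    (summable_geometric_of_lt_one (norm_nonneg q) hq).mul_left ‖a‖

lemma multipliable_qPoch (a : ℂ) : Multipliable fun n : ℕ ↦ 1 - a * q ^ n := by
  simpa [sub_eq_add_neg] using multipliable_one_add_of_summable (f := fun n ↦ -(a * q ^ n))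
    (by simpa using summable_norm_mul_pow hq a)

lemma qPoch_ne_zero {a : ℂ} (ha : ‖a‖ < 1) : qPoch a q ≠ 0 := by
  have hfac (n : ℕ) : 1 + -(a * q ^ n) ≠ 0 := by
    rw [← sub_eq_add_neg, sub_ne_zero]
    refine fun h ↦ (norm_mul_le a (q ^ n)).not_gt ?_
    rw [← h, norm_one, norm_pow]
    exact (mul_le_of_le_one_right (norm_nonneg a) (pow_le_one₀ (norm_nonneg q) hq.le)).trans_lt ha
  simpa [qPoch, sub_eq_add_neg] using
    tprod_one_add_ne_zero_of_summable hfac (by simpa using summable_norm_mul_pow hq a)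

lemma tendsto_prod_range_qPoch (a : ℂ) :
    Tendsto (fun N ↦ ∏ n ∈ range N, (1 - a * q ^ n)) atTop (𝓝 (qPoch a q)) :=
  (multipliable_qPoch hq a).hasProd.tendsto_prod_nat

lemma tendsto_qFactorial : Tendsto (qFactorial q) atTop (𝓝 (qPoch q q)) :=
  (tendsto_prod_range_qPoch hq q).congr fun N ↦ prod_congr rfl fun n _ ↦ by rw [pow_succ']

lemma qPoch_eq_even_mul_odd (a : ℂ) : qPoch a q = qPoch a (q ^ 2) * qPoch (a * q) (q ^ 2) := by
  have hq2 := norm_pow_lt_one hq two_ne_zero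
  rw [qPoch, ← tprod_even_mul_odd (f := fun n ↦ 1 - a * q ^ n)]
  · simp only [qPoch, pow_mul, pow_succ, ← mul_assoc, mul_right_comm a]
  · simpa [pow_mul] using multipliable_qPoch hq2 a
  · simpa [pow_succ, pow_mul, ← mul_assoc, mul_right_comm a] using multipliable_qPoch hq2 (a * q)

lemma qPoch_sq_sq (a : ℂ) : qPoch (a ^ 2) (q ^ 2) = qPoch a q * qPoch (-a) q := by
  rw [qPoch, qPoch, qPoch, ← (multipliable_qPoch hq a).tprod_mul (multipliable_qPoch hq (-a))]
  exact tprod_congr fun n ↦ by ring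

end QPochhammer

section TripleProduct

variable {q : ℂ} (hq : ‖q‖ < 1)
include hq

lemma exists_norm_qBinomial_le : ∃ C, ∀ m k, ‖qBinomial q m k‖ ≤ C := by
  have hF := tendsto_qFactorial hq
  obtain ⟨A, hA⟩ := (Metric.isBounded_range_of_tendsto _ hF).exists_norm_le
  obtain ⟨B, hB⟩ :=
    (Metric.isBounded_range_of_tendsto _ (hF.inv₀ (qPoch_ne_zero hq hq))).exists_norm_le
  have hA0 : 0 ≤ A := (norm_nonneg _).trans (hA _ ⟨0, rfl⟩)
  have hB0 : 0 ≤ B := (norm_nonneg _).trans (hB _ ⟨0, rfl⟩)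
  refine ⟨A * (B * B), fun m k ↦ ?_⟩
  unfold qBinomial
  split_ifs
  · rw [div_eq_mul_inv, mul_inv, norm_mul, norm_mul]
    exact mul_le_mul (hA _ ⟨_, rfl⟩)
      (mul_le_mul (hB _ ⟨_, rfl⟩) (hB _ ⟨_, rfl⟩) (norm_nonneg _) hB0) (by positivity) hA0
  · rw [norm_zero]
    positivity

lemma tendsto_qBinomial_central (n : ℤ) :
    Tendsto (fun N : ℕ ↦ qBinomial q (2 * N) (N + n)) atTop (𝓝 (qPoch q q)⁻¹) := by
  have hF := tendsto_qFactorial hq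
  have hF0 := qPoch_ne_zero hq hq
  have shifted (d : ℤ) :
      Tendsto (fun N : ℕ ↦ qFactorial q ((N : ℤ) + d).toNat) atTop (𝓝 (qPoch q q)) :=
    hF.comp (tendsto_atTop_atTop.2 fun b ↦ ⟨b + d.natAbs, fun N hN ↦ by omega⟩)
  have hlim := (hF.comp (tendsto_id.const_mul_atTop' two_pos)).div ((shifted n).mul (shifted (-n)))
    (mul_ne_zero hF0 hF0)
  rw [div_mul_cancel_left₀ hF0] at hlim
  refine hlim.congr' ((eventually_ge_atTop n.natAbs).mono fun N hN ↦ ?_)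
  simp only [Pi.div_apply, Function.comp_apply, id]
  rw [qBinomial, if_pos (by omega), show ((2 * N : ℕ) : ℤ) - (N + n) = N + -n by push_cast; ring]

theorem jacobi_triple_product (hq0 : q ≠ 0) {ζ : ℂ} (hζ : ζ ≠ 0) :
    qPoch (-ζ * q) q * qPoch (-ζ⁻¹) q * qPoch q q = ∑' n : ℤ, q ^ (n * (n + 1) / 2) * ζ ^ n := by
  obtain ⟨C, hC⟩ := exists_norm_qBinomial_le hq
  have hprod : Tendsto (fun N ↦ ∏ j ∈ range N, (1 + ζ * q ^ (j + 1)) * (1 + ζ⁻¹ * q ^ j)) atTop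
      (𝓝 (qPoch (-ζ * q) q * qPoch (-ζ⁻¹) q)) := by
    refine ((tendsto_prod_range_qPoch hq _).mul (tendsto_prod_range_qPoch hq _)).congr fun N ↦ ?_
    rw [← prod_mul_distrib]
    exact prod_congr rfl fun j _ ↦ by ring
  have hsum : Tendsto (fun N ↦ ∑' n : ℤ, tripleProductCoeff q N n * ζ ^ n) atTop
      (𝓝 (∑' n : ℤ, (qPoch q q)⁻¹ * (q ^ (n * (n + 1) / 2) * ζ ^ n))) := by
    refine tendsto_tsum_of_dominated_convergence
      (bound := fun n ↦ C * (‖q‖ ^ (n * (n + 1) / 2) * ‖ζ‖ ^ n)) ?_ (fun n ↦ ?_) ?_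
    · exact (summable_zpow_triangle_mul_zpow (norm_pos_iff.2 hq0) hq (norm_pos_iff.2 hζ)).mul_left C
    · simpa [tripleProductCoeff, mul_assoc] using (tendsto_qBinomial_central hq n).mul_const _
    · refine Eventually.of_forall fun N n ↦ ?_
      rw [tripleProductCoeff, norm_mul, norm_mul, norm_zpow, norm_zpow, mul_assoc]
      exact mul_le_mul_of_nonneg_right (hC _ _) (by positivity)
  have hlim := tendsto_nhds_unique hprod <| hsum.congr fun N ↦
    (hasSum_tripleProductCoeff_mul_zpow (pow_succ_ne_one_of_norm_lt_one hq) hq0 hζ N).tsum_eq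
  rw [hlim, tsum_mul_left, mul_comm, mul_inv_cancel_left₀ (qPoch_ne_zero hq hq)]

end TripleProduct

section ConstantTerm

open Real

lemma norm_exp_two_pi_I_mul (t : ℝ) : ‖exp (2 * π * I * t)‖ = 1 := by
  rw [show 2 * π * I * t = ((2 * π * t : ℝ) : ℂ) * I by push_cast; ring, norm_exp_ofReal_mul_I]

lemma exp_two_pi_I_mul_zpow (t : ℝ) (n : ℤ) :
    exp (2 * π * I * t) ^ n = exp (2 * π * I * n * t) := by
  rw [← exp_int_mul]
  ring_nf

lemma integral_exp_two_pi_I_mul_zpow (k : ℤ) :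
    ∫ t in (0 : ℝ)..1, exp (2 * π * I * t) ^ k = if k = 0 then 1 else 0 := by
  split_ifs with hk
  · simp [hk]
  have hc : 2 * π * I * k ≠ 0 := by simp [pi_ne_zero, hk]
  simp_rw [exp_two_pi_I_mul_zpow]
  rw [integral_exp_mul_complex hc]
  simp [show 2 * π * I * k = k * (2 * π * I) by ring, exp_int_mul_two_pi_mul_I]

lemma intervalIntegral_tsum_mul {ι : Type*} [Countable ι] {a b : ℝ} {c : ι → ℂ}
    (hc : Summable fun i ↦ ‖c i‖) {F : ι → ℝ → ℂ} {C : ℝ} (hF : ∀ i, Continuous (F i))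
    (hFC : ∀ i t, ‖F i t‖ ≤ C) :
    ∫ t in a..b, ∑' i, c i * F i t = ∑' i, c i * ∫ t in a..b, F i t := by
  have hbound (i : ι) (t : ℝ) : ‖c i * F i t‖ ≤ ‖c i‖ * C := by
    rw [norm_mul]
    exact mul_le_mul_of_nonneg_left (hFC i t) (norm_nonneg _)
  simp_rw [← intervalIntegral.integral_const_mul]
  exact (intervalIntegral.hasSum_integral_of_dominated_convergence (fun i _ ↦ ‖c i‖ * C)
    (fun i ↦ (continuous_const.mul (hF i)).aestronglyMeasurable)
    (fun i ↦ .of_forall fun t _ ↦ hbound i t) (.of_forall fun _ _ ↦ hc.mul_right C)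
    intervalIntegrable_const
    (.of_forall fun t _ ↦ ((hc.mul_right C).of_norm_bounded (hbound · t)).hasSum)).tsum_eq.symm

lemma integral_sq_tsum_mul_exp_zpow {a : ℤ → ℂ} (ha : Summable fun n ↦ ‖a n‖) :
    ∫ t in (0 : ℝ)..1, (∑' n : ℤ, a n * exp (2 * π * I * t) ^ n) ^ 2 = ∑' n : ℤ, a n * a (-n) := by
  set S := fun t : ℝ ↦ ∑' n : ℤ, a n * exp (2 * π * I * t) ^ n
  have hcont (n : ℤ) : Continuous fun t : ℝ ↦ exp (2 * π * I * t) ^ n := by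
    simp_rw [exp_two_pi_I_mul_zpow]
    fun_prop
  have hnorm (n : ℤ) (t : ℝ) : ‖exp (2 * π * I * t) ^ n‖ = 1 := by
    rw [norm_zpow, norm_exp_two_pi_I_mul, one_zpow]
  have hS : Continuous S := continuous_tsum (fun n ↦ continuous_const.mul (hcont n)) ha
    fun n t ↦ by rw [norm_mul, hnorm, mul_one]
  have hS_le (t : ℝ) : ‖S t‖ ≤ ∑' n, ‖a n‖ :=
    (norm_tsum_le_tsum_norm (ha.congr fun n ↦ by rw [norm_mul, hnorm, mul_one])).trans_eq
      (tsum_congr fun n ↦ by rw [norm_mul, hnorm, mul_one])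
  have hcoeff (k : ℤ) : ∫ t in (0 : ℝ)..1, exp (2 * π * I * t) ^ k * S t = a (-k) := calc
    _ = ∫ t in (0 : ℝ)..1, ∑' n : ℤ, a n * exp (2 * π * I * t) ^ (k + n) := by
      refine intervalIntegral.integral_congr fun t _ ↦ ?_
      simp only [S, ← tsum_mul_left, zpow_add₀ (Complex.exp_ne_zero _)]
      exact tsum_congr fun n ↦ by ring
    _ = ∑' n : ℤ, a n * if k + n = 0 then 1 else 0 := by
      rw [intervalIntegral_tsum_mul ha (fun n ↦ hcont (k + n)) fun n t ↦ (hnorm _ t).le]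
      simp_rw [integral_exp_two_pi_I_mul_zpow]
    _ = a (-k) := by
      rw [tsum_eq_single (-k) fun n hn ↦ by rw [if_neg (by omega), mul_zero], add_neg_cancel,
        if_pos rfl, mul_one]
  calc _ = ∫ t in (0 : ℝ)..1, ∑' n : ℤ, a n * (exp (2 * π * I * t) ^ n * S t) := by
        refine intervalIntegral.integral_congr fun t _ ↦ ?_
        simp only [sq, ← tsum_mul_right]
        exact tsum_congr fun n ↦ by ring
    _ = _ := by
      rw [intervalIntegral_tsum_mul (F := fun n t ↦ exp (2 * π * I * t) ^ n * S t)
        (C := ∑' n, ‖a n‖) ha (fun n ↦ (hcont n).mul hS) fun n t ↦ ?_]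
      · simp_rw [hcoeff]
      · rw [norm_mul, hnorm, one_mul]
        exact hS_le t

end ConstantTerm

section Theta

variable {q : ℂ} (hq : ‖q‖ < 1) (hq0 : q ≠ 0)
include hq hq0

lemma tsum_zpow_mul_self_eq_qPoch :
    ∑' n : ℤ, q ^ (n * n) = qPoch (-q) (q ^ 2) ^ 2 * qPoch (q ^ 2) (q ^ 2) := by
  have h := jacobi_triple_product (norm_pow_lt_one hq two_ne_zero) (pow_ne_zero 2 hq0)
    (inv_ne_zero hq0)
  rw [inv_inv, show -q⁻¹ * q ^ 2 = -q by field_simp] at h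
  rw [sq (qPoch (-q) _), h]
  refine tsum_congr fun n ↦ ?_
  rw [← zpow_natCast, ← zpow_mul, inv_zpow', ← zpow_add₀ hq0, ← two_mul_triangle_sub]
  ring_nf

lemma sq_qPoch_mul_sq_qPoch_eq {ζ : ℂ} (hζ : ζ ≠ 0) :
    qPoch (-ζ * q) q ^ 2 * qPoch (-ζ⁻¹) q ^ 2
      = (qPoch q q)⁻¹ ^ 2 * (∑' n : ℤ, q ^ (n * (n + 1) / 2) * ζ ^ n) ^ 2 := by
  rw [← jacobi_triple_product hq hq0 hζ]
  field_simp [qPoch_ne_zero hq hq]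

lemma summable_norm_zpow_triangle : Summable fun n : ℤ ↦ ‖q ^ (n * (n + 1) / 2)‖ := by
  simpa [norm_zpow] using summable_zpow_triangle_mul_zpow (norm_pos_iff.2 hq0) hq one_pos

end Theta

lemma qPoch_neg_sq_mul_qPoch_div_qPoch_sq {q : ℂ} (hq : ‖q‖ < 1) :
    qPoch (-q) (q ^ 2) ^ 2 * qPoch (q ^ 2) (q ^ 2) / qPoch q q ^ 2
      = qPoch (q ^ 2) (q ^ 4) / (qPoch q (q ^ 2) ^ 4 * qPoch (q ^ 4) (q ^ 4)) := by
  have hq2 := norm_pow_lt_one hq two_ne_zero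
  have hq4 := norm_pow_lt_one hq four_ne_zero
  have hsplit : qPoch q q = qPoch q (q ^ 2) * qPoch (q ^ 2) (q ^ 2) := by
    rw [qPoch_eq_even_mul_odd hq, ← sq]
  have hsplit2 : qPoch (q ^ 2) (q ^ 2) = qPoch (q ^ 2) (q ^ 4) * qPoch (q ^ 4) (q ^ 4) := by
    rw [qPoch_eq_even_mul_odd hq2]
    ring_nf
  have hsq : qPoch (q ^ 2) (q ^ 4) = qPoch q (q ^ 2) * qPoch (-q) (q ^ 2) := by
    rw [← qPoch_sq_sq hq2]
    ring_nf
  have := qPoch_ne_zero hq2 hq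
  have := qPoch_ne_zero hq2 (a := -q) (by rwa [norm_neg])
  have := qPoch_ne_zero hq4 hq4
  rw [hsplit, hsplit2, hsq]
  field_simp

/-- The constant term in `ζ` is computed as `∫_0^1` over `ζ = e^{2πit}`. -/
theorem CPhi2_formula (q : ℂ) (hq : ‖q‖ < 1) (hq0 : q ≠ 0) :
    (∫ t in (0:ℝ)..1,
        qPoch (-(Complex.exp (2 * (Real.pi : ℂ) * I * t)) * q) q ^ 2 *
          qPoch (-(Complex.exp (2 * (Real.pi : ℂ) * I * t))⁻¹) q ^ 2) =
      qPoch (q ^ 2) (q ^ 4) / (qPoch q (q ^ 2) ^ 4 * qPoch (q ^ 4) (q ^ 4)) := by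
  rw [intervalIntegral.integral_congr fun t _ ↦ sq_qPoch_mul_sq_qPoch_eq hq hq0 (exp_ne_zero _),
    intervalIntegral.integral_const_mul,
    integral_sq_tsum_mul_exp_zpow (summable_norm_zpow_triangle hq hq0),
    tsum_congr (zpow_triangle_mul_zpow_triangle_neg hq0), tsum_zpow_mul_self_eq_qPoch hq hq0,
    inv_pow, inv_mul_eq_div, qPoch_neg_sq_mul_qPoch_div_qPoch_sq hq]
end
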